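/- Let p > 3 be a prime, G = A × P with A = E_9 and P = C_p, and let 𝒜 be a dense S-ring over G. Let X be a basic set of 𝒜 and V = V(X) ≤ Aut(P) a subgroup whose orbit on P containing X_P equals X_P. Then there exists a subgroup V_0 ≤ V such that Π_P(X) = {X(a) : a ∈ X_A} is exactly the set of orbits of V_0 on X_P; in particular, Π_P(X) is an imprimitivity system for the transitive permutation group induced by V on X_P. -/

import Mathlib

open scoped Pointwise

/-- The element `\underline{X} = Σ_{x∈X} x` of the integral group ring `ℤG`. -/
noncomputable def grpSum {G : Type*} [Group G] [Fintype G] (X : Set G) :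
    MonoidAlgebra ℤ G :=
  ∑ x : G, X.indicator (fun g => MonoidAlgebra.single g (1 : ℤ)) x

/-- A Schur ring (S-ring) over a finite group `G`, described by its partition
into basic sets: (S1) `{1}` is a basic set, (S2) the class of basic sets is
closed under inverses, (S3) the ℤ-span of the sums `\underline{X}` is closed
under multiplication (i.e. is a subring of `ℤG`). -/
structure SchurRing (G : Type*) [Group G] [Fintype G] where
  basicSets : Set (Set G)
  nonempty_mem : ∀ X ∈ basicSets, X.Nonempty
  cover : ∀ g : G, ∃ X ∈ basicSets, g ∈ X
  disjoint' : ∀ X ∈ basicSets, ∀ Y ∈ basicSets, X ≠ Y → X ∩ Y = ∅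
  one_mem : {(1 : G)} ∈ basicSets
  inv_mem : ∀ X ∈ basicSets, X⁻¹ ∈ basicSets
  mul_mem : ∀ X ∈ basicSets, ∀ Y ∈ basicSets,
    grpSum X * grpSum Y ∈ Submodule.span ℤ (grpSum '' basicSets)

namespace SchurRing

variable {G : Type*} [Group G] [Fintype G]

/-- An `𝒜`-set: a union of basic sets. -/
def IsASet (A : SchurRing G) (S : Set G) : Prop :=
  ∃ T ⊆ A.basicSets, S = ⋃₀ T

/-- An `𝒜`-subgroup: a subgroup that is an `𝒜`-set. -/
def IsASubgroup (A : SchurRing G) (H : Subgroup G) : Prop :=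
  A.IsASet (H : Set G)

/-- `𝒜` is schurian: its basic sets are the orbits of the stabilizer of `1`
in some group `K` with `G_right ≤ K ≤ Sym(G)`. -/
def IsSchurian (A : SchurRing G) : Prop :=
  ∃ K : Subgroup (Equiv.Perm G), (∀ g : G, Equiv.mulRight g ∈ K) ∧
    A.basicSets = Set.range fun x : G =>
      MulAction.orbit (MulAction.stabilizer K (1 : G)) x

/-- `𝒜` is cyclotomic: its basic sets are the orbits of a subgroup of `Aut(G)`. -/
def IsCyclotomic (A : SchurRing G) : Prop :=
  ∃ M : Subgroup (MulAut G),
    A.basicSets = Set.range fun x : G => MulAction.orbit M x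

/-- `𝒜` is trivial: its basic sets are `{1}` and `G ∖ {1}`. -/
def IsTrivial (A : SchurRing G) : Prop :=
  A.basicSets ⊆ {{(1 : G)}, {(1 : G)}ᶜ}

/-- `𝒜 = 𝒜_H ⊗ 𝒜_K`: an internal tensor product decomposition of `𝒜`
with respect to the internal direct product `G = H × K`. -/
def IsTensorDecomp (A : SchurRing G) (H K : Subgroup G) : Prop :=
  A.IsASubgroup H ∧ A.IsASubgroup K ∧ H ⊓ K = ⊥ ∧ H ⊔ K = ⊤ ∧
  ∀ X ∈ A.basicSets, ∃ X₁ ∈ A.basicSets, ∃ X₂ ∈ A.basicSets,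
    X₁ ⊆ (H : Set G) ∧ X₂ ⊆ (K : Set G) ∧ X = X₁ * X₂

/-- `𝒜` is the `U/L`-wreath product: `U`, `L` are `𝒜`-subgroups, `L ⊴ G`,
`L ≤ U`, and `L ≤ rad(X)` for every basic set `X` outside `U`. -/
def IsWreathSection (A : SchurRing G) (U L : Subgroup G) : Prop :=
  A.IsASubgroup U ∧ A.IsASubgroup L ∧ L ≤ U ∧ L.Normal ∧
  ∀ X ∈ A.basicSets, ¬ X ⊆ (U : Set G) →
    ∀ g ∈ L, (g * ·) '' X = X ∧ (· * g) '' X = X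

end SchurRing

/-- A finite group is a Schur group if every S-ring over it is schurian. -/
def IsSchurGroup (G : Type*) [Group G] [Fintype G] : Prop :=
  ∀ A : SchurRing G, A.IsSchurian

/-- A Cayley isomorphism between S-rings: a group isomorphism mapping the
basic sets of `𝒜` onto the basic sets of `𝒜'`. -/
def IsCayleyIso {G G' : Type*} [Group G] [Fintype G] [Group G'] [Fintype G']
    (A : SchurRing G) (A' : SchurRing G') (f : G ≃* G') : Prop :=
  (fun X : Set G => ⇑f '' X) '' A.basicSets = A'.basicSets

/-!
By Schur's theorem on multipliers, `X^{(m)} = {x^m : x ∈ X}` is an `𝒜`-set whenever `m` is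
coprime to `|G|`; for a prime `m = q` this is the Frobenius congruence
`\underline{X}^q ≡ \underline{X^{(q)}}` modulo `q`. As `|A| = 9` and `p` are coprime and every
automorphism of `P` is a power map, the Chinese remainder theorem makes `(a, x) ↦ (a, v x)` a
power map of `G` for each `v ∈ Aut(P)`. The image of the basic set `X` under it is an `𝒜`-set
of size `|X|`, hence equal to `X` as soon as it meets `X`. So an element of `V` moving a point of
a fibre `X(a)` inside `X(a)` stabilises every fibre, and the fibres are the orbits of
`V₀ = V ∩ ⋂ₐ Stab(X(a))`. They form a block system since `Aut(P)` is abelian.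
-/

open MonoidAlgebra MulAction

section grpSum

variable {G : Type*} [Group G] [Fintype G]

theorem grpSum_eq_sum (X : Set G) :
    grpSum X = ∑ x ∈ X.toFinite.toFinset, single x (1 : ℤ) := by
  rw [grpSum, ← Finset.sum_subset (Finset.subset_univ X.toFinite.toFinset)
    fun x _ hx => Set.indicator_of_notMem (by simpa using hx) _]
  exact Finset.sum_congr rfl fun x hx => Set.indicator_of_mem (by simpa using hx) _

theorem coeff_grpSum (X : Set G) (g : G) : (grpSum X).coeff g = X.indicator 1 g := by
  classical
  rw [grpSum_eq_sum, coeff_sum, Finsupp.finsetSum_apply]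
  simp [Finsupp.single_apply, Set.indicator_apply]

theorem grpSum_singleton_one : grpSum ({1} : Set G) = 1 := by
  rw [grpSum_eq_sum, Set.Finite.toFinset_singleton, Finset.sum_singleton, one_def]

end grpSum

theorem mapRingHom_grpSum_pow {G : Type*} [CommGroup G] [Fintype G] {q : ℕ} [Fact q.Prime]
    (hq : (Nat.card G).Coprime q) (X : Set G) :
    mapRingHom G (Int.castRingHom (ZMod q)) (grpSum X ^ q) =
      mapRingHom G (Int.castRingHom (ZMod q)) (grpSum ((· ^ q) '' X)) := by
  classical
  have : CharP (MonoidAlgebra (ZMod q) G) q :=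
    charP_of_injective_ringHom
      (FaithfulSMul.algebraMap_injective (ZMod q) (MonoidAlgebra (ZMod q) G)) q
  have himg : ((· ^ q) '' X).toFinite.toFinset = X.toFinite.toFinset.image (· ^ q) := by
    ext; simp
  rw [grpSum_eq_sum, grpSum_eq_sum, himg,
    Finset.sum_image hq.pow_left_bijective.injective.injOn, map_pow, map_sum, map_sum,
    sum_pow_char]
  simp [single_pow]

namespace SchurRing

section Group

variable {G : Type*} [Group G] [Fintype G] {A : SchurRing G}

theorem eq_of_mem_of_mem {X Y : Set G} (hX : X ∈ A.basicSets) (hY : Y ∈ A.basicSets) {g : G}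
    (hgX : g ∈ X) (hgY : g ∈ Y) : X = Y := by
  by_contra hne
  exact Set.notMem_empty g (A.disjoint' X hX Y hY hne ▸ ⟨hgX, hgY⟩)

theorem isASet_iff {S : Set G} :
    A.IsASet S ↔ ∀ Y ∈ A.basicSets, (Y ∩ S).Nonempty → Y ⊆ S := by
  constructor
  · rintro ⟨T, hT, rfl⟩ Y hY ⟨g, hgY, Z, hZT, hgZ⟩
    rw [eq_of_mem_of_mem hY (hT hZT) hgY hgZ]
    exact Set.subset_sUnion_of_mem hZT
  · refine fun h => ⟨{Y ∈ A.basicSets | Y ⊆ S}, fun Y hY => hY.1, ?_⟩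
    refine subset_antisymm (fun g hg => ?_) (Set.sUnion_subset fun Y hY => hY.2)
    obtain ⟨Y, hY, hgY⟩ := A.cover g
    exact ⟨Y, ⟨hY, h Y hY ⟨g, hgY, hg⟩⟩, hgY⟩

theorem IsASet.subset_of_mem {S Y : Set G} (hS : A.IsASet S) (hY : Y ∈ A.basicSets) {g : G}
    (hgY : g ∈ Y) (hgS : g ∈ S) : Y ⊆ S :=
  isASet_iff.1 hS Y hY ⟨g, hgY, hgS⟩

theorem isASet_of_mem {X : Set G} (hX : X ∈ A.basicSets) : A.IsASet X :=
  ⟨{X}, Set.singleton_subset_iff.2 hX, (Set.sUnion_singleton X).symm⟩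

variable (A) in
noncomputable def toSubalgebra : Subalgebra ℤ (MonoidAlgebra ℤ G) :=
  (Submodule.span ℤ (grpSum '' A.basicSets)).toSubalgebra
    (Submodule.subset_span ⟨{1}, A.one_mem, grpSum_singleton_one⟩)
    fun x y hx hy => by
      have hxy := Submodule.mul_mem_mul hx hy
      rw [Submodule.span_mul_span] at hxy
      refine Submodule.span_le.2 ?_ hxy
      rintro _ ⟨_, ⟨X, hX, rfl⟩, _, ⟨Y, hY, rfl⟩, rfl⟩
      exact A.mul_mem X hX Y hY

theorem grpSum_mem_toSubalgebra {X : Set G} (hX : X ∈ A.basicSets) :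
    grpSum X ∈ A.toSubalgebra :=
  Submodule.subset_span ⟨X, hX, rfl⟩

theorem coeff_eq_of_mem_toSubalgebra {f : MonoidAlgebra ℤ G} (hf : f ∈ A.toSubalgebra)
    {Y : Set G} (hY : Y ∈ A.basicSets) {z z' : G} (hz : z ∈ Y) (hz' : z' ∈ Y) :
    f.coeff z = f.coeff z' := by
  induction hf using Submodule.span_induction with
  | mem _ hf =>
    obtain ⟨X, hX, rfl⟩ := hf
    have hzX : z ∈ X ↔ z' ∈ X :=
      ⟨fun h => (isASet_of_mem hX).subset_of_mem hY hz h hz',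
        fun h => (isASet_of_mem hX).subset_of_mem hY hz' h hz⟩
    rw [coeff_grpSum, coeff_grpSum]
    by_cases h : z ∈ X
    · rw [Set.indicator_of_mem h, Set.indicator_of_mem (hzX.1 h), Pi.one_apply, Pi.one_apply]
    · rw [Set.indicator_of_notMem h, Set.indicator_of_notMem (mt hzX.2 h)]
  | zero => simp
  | add f g _ _ hf hg => simp only [coeff_add, Finsupp.add_apply, hf, hg]
  | smul n f _ hf => simp only [coeff_smul_apply, hf]

end Group

section CommGroup

variable {G : Type*} [CommGroup G] [Fintype G] {A : SchurRing G}

theorem isASet_image_pow_of_prime {q : ℕ} (hq : q.Prime) (hqG : (Nat.card G).Coprime q)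
    {X : Set G} (hX : X ∈ A.basicSets) : A.IsASet ((· ^ q) '' X) := by
  have : Fact q.Prime := ⟨hq⟩
  refine isASet_iff.2 fun Y hY ⟨y, hyY, hyX⟩ z hzY => ?_
  have hmod : ((grpSum ((· ^ q) '' X)).coeff z : ZMod q) = (grpSum ((· ^ q) '' X)).coeff y := by
    rw [← eq_intCast (Int.castRingHom (ZMod q)), ← eq_intCast (Int.castRingHom (ZMod q)),
      ← coeff_mapRingHom, ← coeff_mapRingHom, ← mapRingHom_grpSum_pow hqG, coeff_mapRingHom,
      coeff_mapRingHom, coeff_eq_of_mem_toSubalgebra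
        (Subalgebra.pow_mem _ (grpSum_mem_toSubalgebra hX) q) hY hzY hyY]
  by_contra hzX
  simp [coeff_grpSum, Set.indicator_of_mem hyX, Set.indicator_of_notMem hzX] at hmod

theorem IsASet.image_pow {S : Set G} (hS : A.IsASet S) {m : ℕ} (hm : (Nat.card G).Coprime m) :
    A.IsASet ((· ^ m) '' S) := by
  induction m using Nat.recOnMul generalizing S with
  | zero =>
    obtain rfl | hne := S.eq_empty_or_nonempty
    · exact ⟨∅, Set.empty_subset _, by simp⟩
    · simpa [hne.image_const] using isASet_of_mem A.one_mem
  | one => simpa using hS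
  | prime q hq =>
    refine isASet_iff.2 fun Y hY ⟨y, hyY, x, hxS, hxy⟩ => ?_
    obtain ⟨T, hT, rfl⟩ := hS
    obtain ⟨Z, hZT, hxZ⟩ := hxS
    exact ((isASet_image_pow_of_prime hq hm (hT hZT)).subset_of_mem hY hyY
      ⟨x, hxZ, hxy⟩).trans (Set.image_mono (Set.subset_sUnion_of_mem hZT))
  | mul a b iha ihb =>
    have hpow : (· ^ (a * b)) '' S = (· ^ b) '' ((· ^ a) '' S) := by
      simp [Set.image_image, pow_mul]
    rw [hpow]
    exact ihb (iha hS (Nat.Coprime.coprime_mul_right_right hm))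
      (Nat.Coprime.coprime_mul_left_right hm)

end CommGroup

end SchurRing

section Cyclic

variable {K : Type*} [Group K] [Finite K] [IsCyclic K]

theorem MulAut.exists_coprime_pow_eq_apply (v : MulAut K) :
    ∃ t : ℕ, (Nat.card K).Coprime t ∧ ∀ x, v x = x ^ t := by
  obtain ⟨g, hg⟩ := IsCyclic.exists_generator (α := K)
  obtain ⟨t, ht : g ^ t = v g⟩ := mem_powers_iff_mem_zpowers.2 (hg (v g))
  refine ⟨t, ?_, fun x => ?_⟩
  · have hord := v.orderOf_eq g
    rw [← ht, orderOf_pow, orderOf_eq_card_of_forall_mem_zpowers hg, Nat.div_eq_self] at hord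
    exact hord.resolve_left Nat.card_pos.ne'
  · obtain ⟨n, rfl⟩ := Subgroup.mem_zpowers_iff.1 (hg x)
    rw [map_zpow, ← ht, ← zpow_natCast, ← zpow_natCast, ← zpow_mul, ← zpow_mul, mul_comm]

theorem MulAut.commute_of_isCyclic (v w : MulAut K) : Commute v w := by
  obtain ⟨s, -, hs⟩ := v.exists_coprime_pow_eq_apply
  obtain ⟨t, -, ht⟩ := w.exists_coprime_pow_eq_apply
  refine MulEquiv.ext fun x => ?_
  simp only [MulAut.mul_apply, hs, ht, ← pow_mul, mul_comm]

theorem MulAut.isBlock_orbit_of_isCyclic (N : Subgroup (MulAut K)) (x : K) :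
    IsBlock (MulAut K) (orbit N x) :=
  have : N.Normal :=
    ⟨fun n hn g => by rwa [(MulAut.commute_of_isCyclic g n).eq, mul_inv_cancel_right]⟩
  IsBlock.orbit_of_normal x

theorem exists_coprime_pow_eq_prodMap {H : Type*} [Group H] [Finite H]
    (hHK : (Nat.card H).Coprime (Nat.card K)) (v : MulAut K) :
    ∃ m : ℕ, (Nat.card (H × K)).Coprime m ∧ ∀ g : H × K, g ^ m = Prod.map id v g := by
  obtain ⟨t, ht, hv⟩ := v.exists_coprime_pow_eq_apply
  obtain ⟨m, hmH, hmK⟩ := Nat.chineseRemainder hHK 1 t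
  refine ⟨m, ?_, fun g => Prod.ext ?_ ?_⟩
  · rw [Nat.card_prod]
    refine Nat.Coprime.mul_left (Nat.Coprime.symm ?_) (Nat.Coprime.symm ?_)
    · simpa [Nat.Coprime] using hmH.gcd_eq
    · rw [Nat.Coprime, hmK.gcd_eq]; exact ht.symm
  · rw [Prod.pow_fst, ← pow_mod_natCard, hmH, pow_mod_natCard, pow_one, Prod.map_fst, id]
  · rw [Prod.pow_snd, ← pow_mod_natCard, hmK, pow_mod_natCard, Prod.map_snd, hv]

end Cyclic

namespace SchurRing

def fibreStabilizer {H K : Type*} [Group K] (X : Set (H × K)) : Subgroup (MulAut K) :=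
  ⨅ a : H, stabilizer (MulAut K) (Prod.mk a ⁻¹' X)

variable {H K : Type*} [CommGroup H] [Fintype H] [CommGroup K] [Fintype K] [IsCyclic K]
variable {A : SchurRing (H × K)} {X : Set (H × K)}

theorem IsASet.image_prodMap (hHK : (Nat.card H).Coprime (Nat.card K)) {S : Set (H × K)}
    (hS : A.IsASet S) (v : MulAut K) : A.IsASet (Prod.map id v '' S) := by
  obtain ⟨m, hm, hpow⟩ := exists_coprime_pow_eq_prodMap hHK v
  rw [← show (· ^ m) = Prod.map id v from funext hpow]
  exact hS.image_pow hm

theorem mem_fibreStabilizer_of_mem (hHK : (Nat.card H).Coprime (Nat.card K))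
    (hX : X ∈ A.basicSets) {v : MulAut K} {a : H} {x : K} (hx : (a, x) ∈ X)
    (hvx : (a, v x) ∈ X) : v ∈ fibreStabilizer X := by
  have hsub : X ⊆ Prod.map id v '' X :=
    ((isASet_of_mem hX).image_prodMap hHK v).subset_of_mem hX hvx ⟨(a, x), hx, rfl⟩
  have heq : Prod.map id v '' X = X := by
    refine (Set.eq_of_subset_of_ncard_le hsub ?_ (Set.toFinite _)).symm
    rw [Set.ncard_image_of_injective _ (Function.injective_id.prodMap v.injective)]
  refine Subgroup.mem_iInf.2 fun b => mem_stabilizer_iff.2 ?_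
  ext y
  conv_rhs => rw [← heq]
  simp [Set.mem_smul_set]

theorem fibre_eq_orbit (hHK : (Nat.card H).Coprime (Nat.card K)) (hX : X ∈ A.basicSets)
    {V : Subgroup (MulAut K)} {x₀ : K} (hV : Prod.snd '' X = orbit V x₀) {a : H} {x : K}
    (hx : (a, x) ∈ X) :
    Prod.mk a ⁻¹' X = orbit (V ⊓ fibreStabilizer X :) x := by
  refine subset_antisymm (fun y hy => ?_) ?_
  · have hxy : y ∈ orbit V x := by
      rw [orbit_eq_iff.2 (hV ▸ ⟨(a, x), hx, rfl⟩ : x ∈ orbit V x₀), ← hV]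
      exact ⟨(a, y), hy, rfl⟩
    obtain ⟨v, rfl⟩ := hxy
    exact ⟨⟨v, v.2, mem_fibreStabilizer_of_mem hHK hX hx hy⟩, rfl⟩
  · rintro _ ⟨⟨v, -, hv⟩, rfl⟩
    exact mem_stabilizer_iff.1 (Subgroup.mem_iInf.1 hv a) ▸ Set.smul_mem_smul_set hx

end SchurRing

theorem fibre_partition_is_orbit_partition_general (p : ℕ) [Fact p.Prime] (hp : 3 < p)
    (A : SchurRing (Multiplicative (ZMod 3 × ZMod 3) × Multiplicative (ZMod p)))
    (X : Set (Multiplicative (ZMod 3 × ZMod 3) × Multiplicative (ZMod p)))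
    (hX : X ∈ A.basicSets)
    -- V ≤ Aut(P) has the projection X_P as an orbit
    (V : Subgroup (MulAut (Multiplicative (ZMod p))))
    (hV : ∃ x, Prod.snd '' X = MulAction.orbit V x) :
    ∃ V₀ : Subgroup (MulAut (Multiplicative (ZMod p))), V₀ ≤ V ∧
      -- Π_P(X) = {X(a) : a ∈ X_A} is the set of orbits of V₀ on X_P
      {S : Set (Multiplicative (ZMod p)) | ∃ a ∈ Prod.fst '' X, S = {x | (a, x) ∈ X}} =
        {S | ∃ x ∈ Prod.snd '' X, S = MulAction.orbit V₀ x} ∧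
      -- in particular, Π_P(X) is an imprimitivity system for V on X_P
      (∀ v : MulAut (Multiplicative (ZMod p)), v ∈ V →
        ∀ S ∈ {S : Set (Multiplicative (ZMod p)) |
                ∃ a ∈ Prod.fst '' X, S = {x | (a, x) ∈ X}},
          ⇑v '' S = S ∨ (⇑v '' S) ∩ S = ∅) := by
  obtain ⟨x₀, hx₀⟩ := hV
  have hcop : (Nat.card (Multiplicative (ZMod 3 × ZMod 3))).Coprime
      (Nat.card (Multiplicative (ZMod p))) := by
    simpa using ((Nat.coprime_primes Nat.prime_three Fact.out).2 hp.ne).pow_left 2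
  have hfibre {a x} (hax : (a, x) ∈ X) := SchurRing.fibre_eq_orbit hcop hX hx₀ hax
  refine ⟨V ⊓ SchurRing.fibreStabilizer X, inf_le_left, Set.ext fun S => ⟨?_, ?_⟩, ?_⟩
  · rintro ⟨_, ⟨g, hg, rfl⟩, rfl⟩
    exact ⟨g.2, ⟨g, hg, rfl⟩, hfibre hg⟩
  · rintro ⟨_, ⟨g, hg, rfl⟩, rfl⟩
    exact ⟨g.1, ⟨g, hg, rfl⟩, (hfibre hg).symm⟩
  · rintro v - _ ⟨_, ⟨⟨a, x⟩, hax, rfl⟩, rfl⟩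
    have hblock :=
      (MulAut.isBlock_orbit_of_isCyclic (V ⊓ SchurRing.fibreStabilizer X) x).smul_eq_or_disjoint v
    rw [← hfibre hax, Set.disjoint_iff_inter_eq_empty] at hblock
    exact hblock

theorem fibre_partition_is_orbit_partition (p : ℕ) [Fact p.Prime] (hp : 3 < p)
    (A : SchurRing (Multiplicative (ZMod 3 × ZMod 3) × Multiplicative (ZMod p)))
    -- 𝒜 is dense: A = E₉ × 1 and P = 1 × C_p are 𝒜-subgroups
    (hdenseA : A.IsASubgroup ((⊤ : Subgroup (Multiplicative (ZMod 3 × ZMod 3))).prod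
            (⊥ : Subgroup (Multiplicative (ZMod p)))))
    (hdenseP : A.IsASubgroup ((⊥ : Subgroup (Multiplicative (ZMod 3 × ZMod 3))).prod
            (⊤ : Subgroup (Multiplicative (ZMod p)))))
    (X : Set (Multiplicative (ZMod 3 × ZMod 3) × Multiplicative (ZMod p)))
    (hX : X ∈ A.basicSets)
    -- V ≤ Aut(P) has the projection X_P as an orbit
    (V : Subgroup (MulAut (Multiplicative (ZMod p))))
    (hV : ∃ x, Prod.snd '' X = MulAction.orbit V x) :
    ∃ V₀ : Subgroup (MulAut (Multiplicative (ZMod p))), V₀ ≤ V ∧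
      -- Π_P(X) = {X(a) : a ∈ X_A} is the set of orbits of V₀ on X_P
      {S : Set (Multiplicative (ZMod p)) | ∃ a ∈ Prod.fst '' X, S = {x | (a, x) ∈ X}} =
        {S | ∃ x ∈ Prod.snd '' X, S = MulAction.orbit V₀ x} ∧
      -- in particular, Π_P(X) is an imprimitivity system for V on X_P
      (∀ v : MulAut (Multiplicative (ZMod p)), v ∈ V →
        ∀ S ∈ {S : Set (Multiplicative (ZMod p)) |
                ∃ a ∈ Prod.fst '' X, S = {x | (a, x) ∈ X}},
          ⇑v '' S = S ∨ (⇑v '' S) ∩ S = ∅) :=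
  fibre_partition_is_orbit_partition_general p hp A X hX V hV
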